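/- arXiv:2403.10980 — 3 statements merged into one kernel-verified Lean document; each statement's English description precedes it below -/
import Mathlib

section
/- Let N, n be positive integers, let α = (α_1,…,α_N) with α_i ∈ ℝ^n, b ∈ ℝ, and let Ω_α = {x = (x_1,…,x_N) : x_i ∈ ℝ^n, x_i ≥ 0 componentwise for all i, and Σ_{i=1}^N ⟨α_i, x_i⟩ ≤ b}. Assume Slater's condition: there exists x̂ with x̂_i > 0 componentwise for all i and Σ_{i=1}^N ⟨α_i, x̂_i⟩ < b. Let x* ∈ Ω_α and let c = (c_1,…,c_N) with c_i ∈ ℝ^n (the value of the pseudo-gradient at x*). Then x* satisfies the variational inequality Σ_{i=1}^N ⟨c_i, x_i − x*_i⟩ ≥ 0 for all x ∈ Ω_α if and only if there exists a scalar γ ≤ 0 such that Σ_{i=1}^N ⟨c_i, x*_i⟩ − γ b ≤ 0 and c_i − γ α_i ≥ 0 componentwise for every i = 1,…,N. -/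
section Aux

set_option linter.unusedSectionVars false
set_option linter.unnecessarySimpa false

variable {ι : Type*} [Fintype ι] [Nonempty ι] [DecidableEq ι]

lemma sum_mul_single (g : ι → ℝ) (k : ι) (s : ℝ) :
    ∑ m, g m * (Pi.single k s : ι → ℝ) m = g k * s := by
  simp [Pi.single_apply, mul_ite, Finset.sum_ite_eq']

lemma dir_lemma (a c xs : ι → ℝ) (b : ℝ)
    (hx0 : ∀ k, 0 ≤ xs k)
    (hxf : ∑ k, a k * xs k ≤ b)
    (hVI : ∀ x : ι → ℝ, (∀ k, 0 ≤ x k) → ∑ k, a k * x k ≤ b →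
      0 ≤ ∑ k, c k * (x k - xs k))
    (d : ι → ℝ) (hd : ∀ k, d k < 0 → 0 < xs k)
    (ha : ∑ k, a k * d k ≤ 0 ∨ ∑ k, a k * xs k < b) :
    0 ≤ ∑ k, c k * d k := by
  set t₁ : ℝ := Finset.univ.inf' Finset.univ_nonempty
      (fun k => if d k < 0 then xs k / (-d k) else 1) with ht₁def
  have ht₁pos : 0 < t₁ := by
    rw [Finset.lt_inf'_iff]
    intro k _
    by_cases h : d k < 0
    · simp only [h, if_true]
      exact div_pos (hd k h) (by linarith)
    · simp [h]
  have key : ∀ t : ℝ, 0 < t → t ≤ t₁ → ∀ k, 0 ≤ xs k + t * d k := by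
    intro t ht htle k
    rcases le_or_gt 0 (d k) with h | h
    · nlinarith [hx0 k]
    · have hb : t ≤ xs k / (-d k) := by
        refine htle.trans ?_
        have h2 := Finset.inf'_le (f := fun k => if d k < 0 then xs k / (-d k) else 1)
          (Finset.mem_univ k)
        rw [← ht₁def] at h2
        simpa [h] using h2
      have : t * (-d k) ≤ xs k := by
        rw [← le_div_iff₀ (by linarith)]
        exact hb
      nlinarith
  have hsum : ∀ t : ℝ, ∑ k, a k * (xs k + t * d k)
      = ∑ k, a k * xs k + t * ∑ k, a k * d k := by
    intro t
    rw [Finset.mul_sum, ← Finset.sum_add_distrib]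
    exact Finset.sum_congr rfl fun k _ => by ring
  obtain ⟨t, ht, htle, hcon⟩ : ∃ t : ℝ, 0 < t ∧ t ≤ t₁ ∧
      ∑ k, a k * (xs k + t * d k) ≤ b := by
    rcases le_or_gt (∑ k, a k * d k) 0 with hA | hA
    · exact ⟨t₁, ht₁pos, le_refl _, by rw [hsum]; nlinarith⟩
    · rcases ha with h | hslack
      · exact absurd h (not_le.mpr hA)
      · refine ⟨min t₁ ((b - ∑ k, a k * xs k) / ∑ k, a k * d k),
          lt_min ht₁pos (div_pos (by linarith) hA), min_le_left _ _, ?_⟩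
        rw [hsum]
        have h3 : min t₁ ((b - ∑ k, a k * xs k) / ∑ k, a k * d k)
            ≤ (b - ∑ k, a k * xs k) / ∑ k, a k * d k := min_le_right _ _
        rw [le_div_iff₀ hA] at h3
        nlinarith
  have hfin := hVI (fun k => xs k + t * d k) (key t ht htle) hcon
  have heq : ∑ k, c k * (xs k + t * d k - xs k) = t * ∑ k, c k * d k := by
    rw [Finset.mul_sum]
    exact Finset.sum_congr rfl fun k _ => by ring
  rw [heq] at hfin
  exact (mul_nonneg_iff_of_pos_left ht).mp hfin

lemma single_dir (a c xs : ι → ℝ) (b : ℝ)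
    (hx0 : ∀ k, 0 ≤ xs k)
    (hxf : ∑ k, a k * xs k ≤ b)
    (hVI : ∀ x : ι → ℝ, (∀ k, 0 ≤ x k) → ∑ k, a k * x k ≤ b →
      0 ≤ ∑ k, c k * (x k - xs k))
    (k : ι) (s : ℝ) (h : s < 0 → 0 < xs k)
    (ha : a k * s ≤ 0 ∨ ∑ m, a m * xs m < b) :
    0 ≤ c k * s := by
  have hd : ∀ m, (Pi.single k s : ι → ℝ) m < 0 → 0 < xs m := by
    intro m hm
    rcases eq_or_ne m k with rfl | hne
    · exact h (by simpa using hm)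
    · simp [Pi.single_apply, hne] at hm
  have h1 := dir_lemma a c xs b hx0 hxf hVI (Pi.single k s) hd
    (by rcases ha with h' | h'
        · left; rw [sum_mul_single]; exact h'
        · right; exact h')
  rwa [sum_mul_single] at h1

lemma pair_dir (a c xs : ι → ℝ) (b : ℝ)
    (hx0 : ∀ k, 0 ≤ xs k)
    (hxf : ∑ k, a k * xs k ≤ b)
    (hVI : ∀ x : ι → ℝ, (∀ k, 0 ≤ x k) → ∑ k, a k * x k ≤ b →
      0 ≤ ∑ k, c k * (x k - xs k))
    (k l : ι) (hkl : k ≠ l) (s₁ s₂ : ℝ)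
    (h₁ : s₁ < 0 → 0 < xs k) (h₂ : s₂ < 0 → 0 < xs l)
    (ha : a k * s₁ + a l * s₂ ≤ 0) :
    0 ≤ c k * s₁ + c l * s₂ := by
  set d : ι → ℝ := (Pi.single k s₁ : ι → ℝ) + (Pi.single l s₂ : ι → ℝ) with hddef
  have hsum : ∀ g : ι → ℝ, ∑ m, g m * d m = g k * s₁ + g l * s₂ := by
    intro g
    have he : ∀ m, g m * d m
        = g m * (Pi.single k s₁ : ι → ℝ) m + g m * (Pi.single l s₂ : ι → ℝ) m := by
      intro m; rw [hddef]; simp [mul_add]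
    rw [Finset.sum_congr rfl (fun m _ => he m), Finset.sum_add_distrib,
      sum_mul_single, sum_mul_single]
  have hd : ∀ m, d m < 0 → 0 < xs m := by
    intro m hm
    rw [hddef] at hm
    rcases eq_or_ne m k with rfl | hk'
    · exact h₁ (by simpa [Pi.single_apply, hkl] using hm)
    · rcases eq_or_ne m l with rfl | hl'
      · exact h₂ (by simpa [Pi.single_apply, hk'] using hm)
      · simp [Pi.single_apply, hk', hl'] at hm
  have h1 := dir_lemma a c xs b hx0 hxf hVI d hd (Or.inl (by rw [hsum]; exact ha))
  rwa [hsum] at h1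

lemma finish_sum (a c xs : ι → ℝ) (b γ : ℝ) (hx0 : ∀ k, 0 ≤ xs k)
    (hact : ∑ k, a k * xs k = b) (hcs : ∀ k, 0 < xs k → c k ≤ γ * a k) :
    ∑ k, c k * xs k - γ * b ≤ 0 := by
  have h1 : ∑ k, c k * xs k ≤ ∑ k, γ * (a k * xs k) := by
    refine Finset.sum_le_sum fun k _ => ?_
    rcases (hx0 k).eq_or_lt with h | h
    · rw [← h]; simp
    · nlinarith [hcs k h]
  rw [← Finset.mul_sum, hact] at h1
  linarith

lemma key_forward (a c xs : ι → ℝ) (b : ℝ)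
    (hx0 : ∀ k, 0 ≤ xs k)
    (hxf : ∑ k, a k * xs k ≤ b)
    (hVI : ∀ x : ι → ℝ, (∀ k, 0 ≤ x k) → ∑ k, a k * x k ≤ b →
      0 ≤ ∑ k, c k * (x k - xs k)) :
    ∃ γ : ℝ, γ ≤ 0 ∧ (∑ k, c k * xs k) - γ * b ≤ 0 ∧ ∀ k, 0 ≤ c k - γ * a k := by
  have F1 : ∀ k, a k ≤ 0 → 0 ≤ c k := by
    intro k h
    have := single_dir a c xs b hx0 hxf hVI k 1 (by norm_num) (Or.inl (by nlinarith))
    linarith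
  rcases lt_or_eq_of_le hxf with hina | hact
  · -- inactive constraint : γ = 0
    refine ⟨0, le_refl 0, ?_, ?_⟩
    · have h1 : ∑ k, c k * xs k ≤ 0 := by
        rw [show (0:ℝ) = ∑ _k : ι, (0:ℝ) by simp]
        refine Finset.sum_le_sum fun k _ => ?_
        rcases (hx0 k).eq_or_lt with h | h
        · rw [← h]; simp
        · have hle := single_dir a c xs b hx0 hxf hVI k (-1) (fun _ => h) (Or.inr hina)
          nlinarith
      linarith
    · intro k
      have := single_dir a c xs b hx0 hxf hVI k 1 (by norm_num) (Or.inr hina)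
      linarith
  · -- active constraint
    have Fdec : ∀ k, 0 < xs k → 0 ≤ a k → c k ≤ 0 := by
      intro k hk hak
      have := single_dir a c xs b hx0 hxf hVI k (-1) (fun _ => hk)
        (Or.inl (by nlinarith))
      linarith
    by_cases hB : ∃ m, 0 < xs m ∧ a m < 0
    · obtain ⟨m, hxm, ham⟩ := hB
      have hamne : a m ≠ 0 := ne_of_lt ham
      refine ⟨c m / a m, ?_, ?_, ?_⟩
      · exact div_nonpos_iff.mpr (Or.inl ⟨F1 m ham.le, ham.le⟩)
      · refine finish_sum a c xs b _ hx0 hact ?_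
        intro k hk
        rcases eq_or_ne k m with rfl | hkm
        · rw [div_mul_cancel₀ _ hamne]
        · have hp := pair_dir a c xs b hx0 hxf hVI k m hkm (-1) (a k / a m)
            (fun _ => hk) (fun _ => hxm)
            (by rw [mul_comm (a m), div_mul_cancel₀ _ hamne]; linarith)
          have he : c m * (a k / a m) = c m / a m * a k := by ring
          rw [he] at hp
          linarith
      · intro k
        rcases eq_or_ne k m with rfl | hkm
        · rw [div_mul_cancel₀ _ hamne]; simp
        · have hp := pair_dir a c xs b hx0 hxf hVI k m hkm 1 (-(a k) / a m)
            (by norm_num) (fun _ => hxm)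
            (by rw [mul_comm (a m), div_mul_cancel₀ _ hamne]; linarith)
          have he : c m * (-(a k) / a m) = -(c m / a m * a k) := by ring
          rw [he] at hp
          linarith
    · push_neg at hB
      have hB' : ∀ m, 0 < xs m → 0 ≤ a m := hB
      set S : Finset ℝ :=
        insert 0 ((Finset.univ.filter fun l => 0 < a l).image fun l => c l / a l) with hS
      have hSne : S.Nonempty := Finset.insert_nonempty _ _
      set γ : ℝ := S.min' hSne with hγdef
      have hγ0 : γ ≤ 0 := Finset.min'_le _ _ (Finset.mem_insert_self _ _)
      have hratio : ∀ l, 0 < a l → γ ≤ c l / a l := by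
        intro l hl
        refine Finset.min'_le _ _ (Finset.mem_insert_of_mem ?_)
        exact Finset.mem_image.mpr ⟨l, Finset.mem_filter.mpr ⟨Finset.mem_univ l, hl⟩, rfl⟩
      have hge : ∀ k, 0 ≤ c k - γ * a k := by
        intro k
        rcases lt_trichotomy (a k) 0 with hneg | hzero | hpos
        · have hlow : c k / a k ≤ γ := by
            refine Finset.le_min' _ _ _ ?_
            intro y hy
            rcases Finset.mem_insert.mp hy with rfl | hy'
            · exact div_nonpos_iff.mpr (Or.inl ⟨F1 k hneg.le, hneg.le⟩)
            · obtain ⟨l, hl, rfl⟩ := Finset.mem_image.mp hy'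
              have hla : 0 < a l := (Finset.mem_filter.mp hl).2
              have hlk : l ≠ k := by rintro rfl; linarith
              have hq : 0 < -(a l) / a k := div_pos_of_neg_of_neg (by linarith) hneg
              have hp := pair_dir a c xs b hx0 hxf hVI l k hlk 1 (-(a l) / a k)
                (by norm_num) (fun hcon => absurd hcon (not_lt.mpr hq.le))
                (by rw [mul_comm (a k), div_mul_cancel₀ _ (ne_of_lt hneg)]; linarith)
              have he : c k * (-(a l) / a k) = -((c k / a k) * a l) := by ring
              rw [he, mul_one] at hp
              refine (le_div_iff₀ hla).mpr ?_
              linarith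
          rw [div_le_iff_of_neg hneg] at hlow
          linarith
        · have := F1 k hzero.le
          rw [hzero]; simpa using this
        · have := hratio k hpos
          rw [le_div_iff₀ hpos] at this
          linarith
      refine ⟨γ, hγ0, ?_, hge⟩
      refine finish_sum a c xs b _ hx0 hact ?_
      intro k hk
      rcases (hB' k hk).eq_or_lt with heq | hpos
      · rw [← heq]; simpa using Fdec k hk (le_of_eq heq)
      · have hup : c k / a k ≤ γ := by
          refine Finset.le_min' _ _ _ ?_
          intro y hy
          rcases Finset.mem_insert.mp hy with rfl | hy'
          · exact div_nonpos_iff.mpr (Or.inr ⟨Fdec k hk hpos.le, hpos.le⟩)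
          · obtain ⟨l, hl, rfl⟩ := Finset.mem_image.mp hy'
            have hla : 0 < a l := (Finset.mem_filter.mp hl).2
            rcases eq_or_ne k l with rfl | hkl
            · exact le_refl _
            · have hp := pair_dir a c xs b hx0 hxf hVI k l hkl (-1) (a k / a l)
                (fun _ => hk)
                (fun hcon => absurd hcon (not_lt.mpr (div_pos hpos hla).le))
                (by rw [mul_comm (a l), div_mul_cancel₀ _ (ne_of_gt hla)]; linarith)
              have h6 : c k ≤ c l * (a k / a l) := by linarith
              have h7 := mul_le_mul_of_nonneg_right h6 hla.le
              have hlane : a l ≠ 0 := ne_of_gt hla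
              have he : c l * (a k / a l) * a l = c l * a k := by field_simp
              rw [he] at h7
              rw [div_le_div_iff₀ hpos hla]
              linarith
        rw [div_le_iff₀ hpos] at hup
        linarith

end Aux

section Main

lemma key_backward {ι : Type*} [Fintype ι] (a c xs : ι → ℝ) (b γ : ℝ)
    (hγ0 : γ ≤ 0) (hsum : (∑ k, c k * xs k) - γ * b ≤ 0)
    (hge : ∀ k, 0 ≤ c k - γ * a k)
    (x : ι → ℝ) (hx : ∀ k, 0 ≤ x k) (hxb : ∑ k, a k * x k ≤ b) :
    0 ≤ ∑ k, c k * (x k - xs k) := by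
  have h1 : ∑ k, c k * (x k - xs k)
      = (∑ k, (c k - γ * a k) * x k) + γ * (∑ k, a k * x k) - ∑ k, c k * xs k := by
    rw [Finset.mul_sum, ← Finset.sum_add_distrib, ← Finset.sum_sub_distrib]
    exact Finset.sum_congr rfl fun k _ => by ring
  have h2 : 0 ≤ ∑ k, (c k - γ * a k) * x k :=
    Finset.sum_nonneg fun k _ => mul_nonneg (hge k) (hx k)
  have h3 : γ * b ≤ γ * ∑ k, a k * x k := mul_le_mul_of_nonpos_left hxb hγ0
  rw [h1]
  linarith

/-- Theorem 1 of the paper: under Slater's condition, a point `xstar` of the coupled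
feasible set `Ω_α` solves the variational inequality `VI(Ω_α, c)` iff there is a
scalar `γ ≤ 0` with `⟨c, x*⟩ - γ b ≤ 0` and `c_i - γ α_i ≥ 0` componentwise. -/
theorem stmt0 (N n : ℕ) (hN : 0 < N) (hn : 0 < n)
    (α : Fin N → Fin n → ℝ) (b : ℝ)
    (slater : ∃ xh : Fin N → Fin n → ℝ,
      (∀ i j, 0 < xh i j) ∧ ∑ i, ∑ j, α i j * xh i j < b)
    (xstar : Fin N → Fin n → ℝ)
    (hx_nonneg : ∀ i j, 0 ≤ xstar i j)
    (hx_feas : ∑ i, ∑ j, α i j * xstar i j ≤ b)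
    (c : Fin N → Fin n → ℝ) :
    (∀ x : Fin N → Fin n → ℝ, (∀ i j, 0 ≤ x i j) →
        (∑ i, ∑ j, α i j * x i j ≤ b) →
        0 ≤ ∑ i, ∑ j, c i j * (x i j - xstar i j)) ↔
    (∃ γ : ℝ, γ ≤ 0 ∧
        (∑ i, ∑ j, c i j * xstar i j) - γ * b ≤ 0 ∧
        ∀ i j, 0 ≤ c i j - γ * α i j) := by
  haveI h1 : Nonempty (Fin N) := ⟨⟨0, hN⟩⟩
  haveI h2 : Nonempty (Fin n) := ⟨⟨0, hn⟩⟩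
  constructor
  · intro hVI
    obtain ⟨γ, hg1, hg2, hg3⟩ := key_forward
      (fun p : Fin N × Fin n => α p.1 p.2) (fun p => c p.1 p.2)
      (fun p => xstar p.1 p.2) b
      (fun k => hx_nonneg k.1 k.2)
      (by rw [Fintype.sum_prod_type]; exact hx_feas)
      (by
        intro x hx hxb
        have h := hVI (fun i j => x (i, j)) (fun i j => hx (i, j))
          (by rw [Fintype.sum_prod_type] at hxb; exact hxb)
        rw [Fintype.sum_prod_type]
        exact h)
    refine ⟨γ, hg1, ?_, fun i j => hg3 (i, j)⟩
    rw [Fintype.sum_prod_type] at hg2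
    exact hg2
  · rintro ⟨γ, hg1, hg2, hg3⟩ x hx hxb
    have h := key_backward
      (fun p : Fin N × Fin n => α p.1 p.2) (fun p => c p.1 p.2)
      (fun p => xstar p.1 p.2) b γ hg1
      (by rw [Fintype.sum_prod_type]; exact hg2)
      (fun p => hg3 p.1 p.2)
      (fun p => x p.1 p.2) (fun p => hx p.1 p.2)
      (by rw [Fintype.sum_prod_type]; exact hxb)
    rw [Fintype.sum_prod_type] at h
    exact h

end Main
end

section
/- Let N, n be positive integers, α = (α_1,…,α_N) with α_i ∈ ℝ^n, b ∈ ℝ, and Ω_α = {x = (x_1,…,x_N) : x_i ≥ 0 componentwise for all i, Σ_{i=1}^N ⟨α_i, x_i⟩ ≤ b}. Assume Slater's condition: there exists x̂ with x̂_i > 0 componentwise for all i and Σ_{i=1}^N ⟨α_i, x̂_i⟩ < b. Let x* ∈ Ω_α, let c = (c_1,…,c_N) with c_i ∈ ℝ^n, and let δ ≥ 0 be a slack scalar. Then the relaxed variational inequality Σ_{i=1}^N ⟨c_i, x_i − x*_i⟩ + δ ≥ 0 for all x ∈ Ω_α holds if and only if there exists a scalar γ ≤ 0 such that Σ_{i=1}^N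 ⟨c_i, x*_i⟩ − γ b ≤ δ and c_i − γ α_i ≥ 0 componentwise for every i. -/
private lemma sum_single {K : Type*} [Fintype K] [DecidableEq K] (f : K → ℝ) (k : K) (p : ℝ) :
    ∑ m, f m * (if m = k then p else 0) = f k * p := by
  simp [mul_ite]

private lemma sum_two {K : Type*} [Fintype K] [DecidableEq K] (f : K → ℝ) (k l : K)
    (hkl : k ≠ l) (p q : ℝ) :
    ∑ m, f m * (if m = k then p else if m = l then q else 0) = f k * p + f l * q := by
  have h : ∀ m, f m * (if m = k then p else if m = l then q else 0)
      = f m * (if m = k then p else 0) + f m * (if m = l then q else 0) := by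
    intro m
    rcases eq_or_ne m k with h1 | h1
    · subst h1; simp [hkl]
    · rcases eq_or_ne m l with h2 | h2
      · subst h2; simp [h1]
      · simp [h1, h2]
  rw [Finset.sum_congr rfl (fun m _ => h m), Finset.sum_add_distrib, sum_single, sum_single]

private lemma key {K : Type*} [Fintype K] [DecidableEq K]
    (a : K → ℝ) (b : ℝ)
    (xh : K → ℝ) (hxh_pos : ∀ k, 0 < xh k) (hxh : ∑ k, a k * xh k < b)
    (xs : K → ℝ) (hxs : ∀ k, 0 ≤ xs k) (hfeas : ∑ k, a k * xs k ≤ b)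
    (c : K → ℝ) (δ : ℝ) (hδ : 0 ≤ δ) :
    (∀ x : K → ℝ, (∀ k, 0 ≤ x k) → (∑ k, a k * x k ≤ b) →
        0 ≤ (∑ k, c k * (x k - xs k)) + δ) ↔
    (∃ γ : ℝ, γ ≤ 0 ∧ (∑ k, c k * xs k) - γ * b ≤ δ ∧ ∀ k, 0 ≤ c k - γ * a k) := by
  constructor
  · intro hVI
    -- recession directions have nonnegative cost
    have hD : ∀ d : K → ℝ, (∀ k, 0 ≤ d k) → (∑ k, a k * d k ≤ 0) → 0 ≤ ∑ k, c k * d k := by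
      intro d hd hda
      by_contra hcd
      push_neg at hcd
      set S : ℝ := ∑ k, c k * d k with hS
      set C : ℝ := (∑ k, c k * (xh k - xs k)) + δ with hC
      have hC0 : 0 ≤ C := hVI xh (fun k => (hxh_pos k).le) hxh.le
      set t : ℝ := (C + 1) / (-S) with ht
      have htpos : 0 < t := div_pos (by linarith) (by linarith)
      have hfeas' : ∑ k, a k * (xh k + t * d k) ≤ b := by
        have heq : ∑ k, a k * (xh k + t * d k)
            = (∑ k, a k * xh k) + t * ∑ k, a k * d k := by
          rw [Finset.mul_sum, ← Finset.sum_add_distrib]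
          exact Finset.sum_congr rfl (fun k _ => by ring)
        rw [heq]
        nlinarith
      have hx := hVI (fun k => xh k + t * d k)
        (fun k => add_nonneg (hxh_pos k).le (mul_nonneg htpos.le (hd k))) hfeas'
      have hval : ∑ k, c k * ((xh k + t * d k) - xs k)
          = (∑ k, c k * (xh k - xs k)) + t * S := by
        rw [hS, Finset.mul_sum, ← Finset.sum_add_distrib]
        exact Finset.sum_congr rfl (fun k _ => by ring)
      have hSne : S ≠ 0 := ne_of_lt hcd
      have htS : t * S = -(C + 1) := by
        rw [ht, div_mul_eq_mul_div, mul_div_assoc, div_neg, div_self hSne]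
        ring
      rw [hval] at hx
      rw [htS] at hx
      linarith
    have hF1 : ∀ k, a k ≤ 0 → 0 ≤ c k := by
      intro k hk
      have hd := hD (fun m => if m = k then 1 else 0)
        (fun m => by by_cases h : m = k <;> simp [h])
        (by rw [sum_single]; linarith)
      rw [sum_single] at hd
      linarith
    have hF2 : ∀ k l, a k < 0 → 0 < a l → c l * a k ≤ c k * a l := by
      intro k l hk hl
      have hkl : k ≠ l := by rintro rfl; linarith
      have hd := hD (fun m => if m = k then a l else if m = l then -(a k) else 0)
        (fun m => by
          rcases eq_or_ne m k with h1 | h1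
          · subst h1; simp [hl.le]
          · rcases eq_or_ne m l with h2 | h2
            · subst h2; simp [h1, neg_nonneg, hk.le]
            · simp [h1, h2])
        (by rw [sum_two a k l hkl]; nlinarith)
      rw [sum_two c k l hkl] at hd
      nlinarith
    -- evaluating VI at a single-coordinate feasible point
    have hWitness : ∀ k0 : K, a k0 ≠ 0 → 0 ≤ b / a k0 →
        (∑ k, c k * xs k) - (c k0 / a k0) * b ≤ δ := by
      intro k0 hne hq
      have hx := hVI (fun m => if m = k0 then b / a k0 else 0)
        (fun m => by by_cases h : m = k0 <;> simp [h, hq])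
        (by rw [sum_single]
            rw [mul_comm, div_mul_cancel₀ b hne])
      have hval : ∑ m, c m * ((if m = k0 then b / a k0 else 0) - xs m)
          = c k0 * (b / a k0) - ∑ m, c m * xs m := by
        have h : ∀ m, c m * ((if m = k0 then b / a k0 else 0) - xs m)
            = c m * (if m = k0 then b / a k0 else 0) - c m * xs m := fun m => by ring
        rw [Finset.sum_congr rfl (fun m _ => h m), Finset.sum_sub_distrib, sum_single]
      rw [hval] at hx
      have : c k0 * (b / a k0) = c k0 / a k0 * b := by ring
      linarith
    by_cases hb : b < 0
    · -- must use a negative-coefficient coordinate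
      have hexk : ∃ k, a k < 0 := by
        by_contra h
        push_neg at h
        have : 0 ≤ ∑ k, a k * xs k :=
          Finset.sum_nonneg (fun k _ => mul_nonneg (h k) (hxs k))
        linarith
      obtain ⟨kw, hkw⟩ := hexk
      obtain ⟨k0, hk0mem, hk0max⟩ :=
        Finset.exists_max_image (Finset.univ.filter (fun k => a k < 0)) (fun k => c k / a k)
          ⟨kw, by simp [hkw]⟩
      have hk0 : a k0 < 0 := (Finset.mem_filter.mp hk0mem).2
      have hk0ne : a k0 ≠ 0 := ne_of_lt hk0
      refine ⟨c k0 / a k0, div_nonpos_of_nonneg_of_nonpos (hF1 k0 hk0.le) hk0.le, ?_, ?_⟩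
      · exact hWitness k0 hk0ne (div_nonneg_of_nonpos hb.le hk0.le)
      · intro m
        rcases lt_trichotomy (a m) 0 with hm | hm | hm
        · have hmax := hk0max m (by simp [hm])
          have h2 : (c k0 / a k0) * a m ≤ c m := (div_le_iff_of_neg hm).mp hmax
          linarith
        · have := hF1 m hm.le
          rw [hm]; linarith
        · have hf2 := hF2 k0 m hk0 hm
          have h2 : (c k0 / a k0) * a m ≤ c m := by
            rw [div_mul_eq_mul_div, div_le_iff_of_neg hk0]
            linarith
          linarith
    · push_neg at hb
      by_cases hc : ∀ l, 0 < a l → 0 ≤ c l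
      · refine ⟨0, le_refl 0, ?_, ?_⟩
        · have hx := hVI (fun _ => 0) (fun _ => le_refl 0)
            (by simpa using hb)
          have hval : ∑ m, c m * ((0 : ℝ) - xs m) = -∑ m, c m * xs m := by
            rw [← Finset.sum_neg_distrib]
            exact Finset.sum_congr rfl (fun m _ => by ring)
          rw [hval] at hx
          linarith
        · intro m
          rcases le_or_gt (a m) 0 with hm | hm
          · have := hF1 m hm; linarith
          · have := hc m hm; linarith
      · push_neg at hc
        obtain ⟨lw, hlw, hclw⟩ := hc
        obtain ⟨l0, hl0mem, hl0min⟩ :=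
          Finset.exists_min_image (Finset.univ.filter (fun k => 0 < a k)) (fun k => c k / a k)
            ⟨lw, by simp [hlw]⟩
        have hl0 : 0 < a l0 := (Finset.mem_filter.mp hl0mem).2
        have hl0ne : a l0 ≠ 0 := ne_of_gt hl0
        have hγneg : c l0 / a l0 ≤ 0 :=
          ((hl0min lw (by simp [hlw])).trans_lt (div_neg_of_neg_of_pos hclw hlw)).le
        refine ⟨c l0 / a l0, hγneg, ?_, ?_⟩
        · exact hWitness l0 hl0ne (div_nonneg hb hl0.le)
        · intro m
          rcases lt_trichotomy (a m) 0 with hm | hm | hm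
          · have hf2 := hF2 m l0 hm hl0
            have h2 : (c l0 / a l0) * a m ≤ c m := by
              rw [div_mul_eq_mul_div, div_le_iff₀ hl0]
              linarith
            linarith
          · have := hF1 m hm.le
            rw [hm]; linarith
          · have := hl0min m (by simp [hm])
            have h2 : (c l0 / a l0) * a m ≤ c m := by
              rw [← le_div_iff₀ hm]
              exact this
            linarith
  · rintro ⟨γ, hγ, hsum, hcomp⟩ x hx hxb
    have h1 : γ * b ≤ γ * ∑ k, a k * x k := mul_le_mul_of_nonpos_left hxb hγ
    have h2 : 0 ≤ ∑ k, (c k - γ * a k) * x k :=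
      Finset.sum_nonneg (fun k _ => mul_nonneg (hcomp k) (hx k))
    have h3 : ∑ k, (c k - γ * a k) * x k
        = (∑ k, c k * x k) - γ * ∑ k, a k * x k := by
      rw [Finset.mul_sum, ← Finset.sum_sub_distrib]
      exact Finset.sum_congr rfl (fun k _ => by ring)
    have h4 : ∑ k, c k * (x k - xs k) = (∑ k, c k * x k) - ∑ k, c k * xs k := by
      rw [← Finset.sum_sub_distrib]
      exact Finset.sum_congr rfl (fun k _ => by ring)
    rw [h4]
    rw [h3] at h2
    linarith

/-- Slack-relaxed version (relation (11)) of Theorem 1: under Slater's condition,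
the relaxed variational inequality with slack `δ ≥ 0` holds iff there is `γ ≤ 0`
with `⟨c, x*⟩ - γ b ≤ δ` and `c_i - γ α_i ≥ 0` componentwise. -/
theorem stmt3 (N n : ℕ) (hN : 0 < N) (hn : 0 < n)
    (α : Fin N → Fin n → ℝ) (b : ℝ)
    (slater : ∃ xh : Fin N → Fin n → ℝ,
      (∀ i j, 0 < xh i j) ∧ ∑ i, ∑ j, α i j * xh i j < b)
    (xstar : Fin N → Fin n → ℝ)
    (hx_nonneg : ∀ i j, 0 ≤ xstar i j)
    (hx_feas : ∑ i, ∑ j, α i j * xstar i j ≤ b)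
    (c : Fin N → Fin n → ℝ)
    (δ : ℝ) (hδ : 0 ≤ δ) :
    (∀ x : Fin N → Fin n → ℝ, (∀ i j, 0 ≤ x i j) →
        (∑ i, ∑ j, α i j * x i j ≤ b) →
        0 ≤ (∑ i, ∑ j, c i j * (x i j - xstar i j)) + δ) ↔
    (∃ γ : ℝ, γ ≤ 0 ∧
        (∑ i, ∑ j, c i j * xstar i j) - γ * b ≤ δ ∧
        ∀ i j, 0 ≤ c i j - γ * α i j) := by
  obtain ⟨xh, hxh_pos, hxh⟩ := slater
  have hiff := key (K := Fin N × Fin n) (fun p => α p.1 p.2) b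
      (fun p => xh p.1 p.2) (fun p => hxh_pos p.1 p.2)
      (by rw [Fintype.sum_prod_type]; exact hxh)
      (fun p => xstar p.1 p.2) (fun p => hx_nonneg p.1 p.2)
      (by rw [Fintype.sum_prod_type]; exact hx_feas)
      (fun p => c p.1 p.2) δ hδ
  constructor
  · intro h
    obtain ⟨γ, hγ, hsum, hcomp⟩ := hiff.mp (fun x hx hxb => by
      have hxb' : ∑ i, ∑ j, α i j * x (i, j) ≤ b := by
        rw [Fintype.sum_prod_type] at hxb; exact hxb
      have := h (fun i j => x (i, j)) (fun i j => hx (i, j)) hxb'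
      rw [Fintype.sum_prod_type]; exact this)
    refine ⟨γ, hγ, ?_, fun i j => hcomp (i, j)⟩
    rw [Fintype.sum_prod_type] at hsum
    exact hsum
  · intro h x hx hxb
    obtain ⟨γ, hγ, hsum, hcomp⟩ := h
    have := hiff.mpr ⟨γ, hγ, by rw [Fintype.sum_prod_type]; exact hsum,
      fun p => hcomp p.1 p.2⟩ (fun p => x p.1 p.2) (fun p => hx p.1 p.2)
      (by rw [Fintype.sum_prod_type]; exact hxb)
    rw [Fintype.sum_prod_type] at this
    exact this
end

section
/- Let N, n be positive integers and, for each i = 1,…,N, let m_i be a positive integer, D_i an m_i × n real matrix, and d_i ∈ ℝ^{m_i}, with each polyhedron A_i = {α ∈ ℝ^n : D_i α ≤ d_i} nonempty. Let x_1,…,x_N ∈ ℝ^n and b ∈ ℝ. Then the robust constraint Σ_{i=1}^N ⟨α_i, x_i⟩ ≤ b holds for every choice α_i ∈ A_i (i = 1,…,N) if and only if there exist vectors y_1,…,y_N with y_i ∈ ℝ^{m_i}, y_i ≥ 0 componentwise, D_iᵀ y_i = x_i for every i, and Σ_{i=1}^N ⟨y_i, d_i⟩ ≤ b. -/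
/-!
The robust constraint over the product `∏ i, Aᵢ` is a single linear program whose constraint
matrix is the block-diagonal matrix of the `Dᵢ`, so the statement is LP duality for that program.
LP duality follows from Farkas' lemma for the cone generated by the vectors `(Dₖ, dₖ)` and
`(0, 1)`, splitting on the sign of the last coordinate of the separating functional.
Farkas' lemma is hyperplane separation from a closed cone: a finitely generated cone is closed
because, by Carathéodory's theorem for cones, it is a finite union of cones over linearly
independent sets, and each of these is the image of the nonnegative orthant under an injective
linear map.
-/

open Matrix PointedCone

namespace PointedCone

section Module
variable {E : Type*} [AddCommGroup E] [Module ℝ E]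

theorem mem_hull_range_iff {ι : Type*} [Fintype ι] {v : ι → E} {u : E} :
    u ∈ hull ℝ (Set.range v) ↔ ∃ c : ι → ℝ, 0 ≤ c ∧ ∑ i, c i • v i = u := by
  constructor
  · intro hu
    obtain ⟨c, rfl⟩ := (Submodule.mem_span_range_iff_exists_fun _).mp hu
    exact ⟨fun i => c i, fun i => (c i).2, rfl⟩
  · rintro ⟨c, hc, rfl⟩
    exact Submodule.sum_mem _ fun i _ => smul_mem _ (hc i) (subset_hull ⟨i, rfl⟩)

theorem mem_hull_finset_iff {t : Finset E} {u : E} :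
    u ∈ hull ℝ (t : Set E) ↔ ∃ c : E → ℝ, (∀ x ∈ t, 0 ≤ c x) ∧ ∑ x ∈ t, c x • x = u := by
  constructor
  · intro hu
    obtain ⟨c, -, rfl⟩ := Submodule.mem_span_finset.mp hu
    exact ⟨fun x => c x, fun x _ => (c x).2, rfl⟩
  · rintro ⟨c, hc, rfl⟩
    exact Submodule.sum_mem _ fun x hx => smul_mem _ (hc x hx) (subset_hull hx)

theorem exists_mem_hull_erase_of_not_linearIndepOn [DecidableEq E] {t : Finset E}
    {u : E} (hu : u ∈ hull ℝ (t : Set E)) (ht : ¬LinearIndepOn ℝ id (t : Set E)) :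
    ∃ x ∈ t, u ∈ hull ℝ (t.erase x : Set E) := by
  obtain ⟨c, hc, rfl⟩ := mem_hull_finset_iff.mp hu
  obtain ⟨g, hg, x₀, hx₀, hgx₀⟩ := not_linearIndepOn_finset_iff.mp ht
  simp only [id] at hg
  wlog hpos : 0 < g x₀ generalizing g
  · refine this (-g) (neg_ne_zero.mpr hgx₀) (by simp [hg]) ?_
    simpa using lt_of_le_of_ne (not_lt.mp hpos) hgx₀
  obtain ⟨x₁, hx₁, hmin⟩ :=
    (t.filter (0 < g ·)).exists_min_image (fun x => c x / g x) ⟨x₀, by simp [hx₀, hpos]⟩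
  rw [Finset.mem_filter] at hx₁
  -- the largest step along `-g` that keeps all coefficients nonnegative; it kills `x₁`
  set r := c x₁ / g x₁
  have hr : 0 ≤ r := div_nonneg (hc _ hx₁.1) hx₁.2.le
  refine ⟨x₁, hx₁.1, mem_hull_finset_iff.mpr ⟨fun x => c x - r * g x, fun x hx => ?_, ?_⟩⟩
  · have hxt := Finset.mem_of_mem_erase hx
    rcases lt_or_ge 0 (g x) with hgx | hgx
    · have := hmin x (Finset.mem_filter.mpr ⟨hxt, hgx⟩)
      rw [le_div_iff₀ hgx] at this
      linarith
    · nlinarith [hc x hxt]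
  · rw [Finset.sum_erase _ (by simp [r, div_mul_cancel₀ _ hx₁.2.ne'])]
    simp [sub_smul, Finset.sum_sub_distrib, mul_smul, ← Finset.smul_sum, hg]

theorem exists_linearIndepOn_mem_hull {t : Finset E} {u : E}
    (hu : u ∈ hull ℝ (t : Set E)) :
    ∃ s ⊆ t, LinearIndepOn ℝ id (s : Set E) ∧ u ∈ hull ℝ (s : Set E) := by
  classical
  induction t using Finset.strongInduction with
  | H t ih =>
    by_cases ht : LinearIndepOn ℝ id (t : Set E)
    · exact ⟨t, subset_rfl, ht, hu⟩
    obtain ⟨x, hx, hux⟩ := exists_mem_hull_erase_of_not_linearIndepOn hu ht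
    obtain ⟨s, hs, hli, hus⟩ := ih _ (Finset.erase_ssubset hx) hux
    exact ⟨s, hs.trans (Finset.erase_subset _ _), hli, hus⟩

end Module

section Topology
variable {E : Type*} [NormedAddCommGroup E] [NormedSpace ℝ E]

theorem isClosed_hull_of_linearIndepOn {t : Finset E}
    (ht : LinearIndepOn ℝ id (t : Set E)) : IsClosed (hull ℝ (t : Set E) : Set E) := by
  have hL : Topology.IsClosedEmbedding (Fintype.linearCombination ℝ ((↑) : t → E)) :=
    LinearMap.isClosedEmbedding_of_injective
      (LinearMap.ker_eq_bot.mpr ht.fintypeLinearCombination_injective)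
  have : (hull ℝ (t : Set E) : Set E) =
      Fintype.linearCombination ℝ ((↑) : t → E) '' Set.Ici 0 := by
    have hrange : Set.range ((↑) : t → E) = t := by ext; simp
    ext u
    rw [SetLike.mem_coe, ← hrange, mem_hull_range_iff]
    simp [Fintype.linearCombination_apply]
  rw [this]
  exact hL.isClosedMap _ isClosed_Ici

theorem isClosed_hull_finset (t : Finset E) :
    IsClosed (hull ℝ (t : Set E) : Set E) := by
  classical
  have : (hull ℝ (t : Set E) : Set E) =
      ⋃ s ∈ ({s ∈ t.powerset | LinearIndepOn ℝ id (s : Set E)} : Finset (Finset E)),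
        (hull ℝ (s : Set E) : Set E) := by
    ext u
    simp only [SetLike.mem_coe, Set.mem_iUnion, Finset.mem_filter, Finset.mem_powerset,
      exists_prop]
    constructor
    · intro hu
      obtain ⟨s, hst, hs, hus⟩ := exists_linearIndepOn_mem_hull hu
      exact ⟨s, ⟨hst, hs⟩, hus⟩
    · rintro ⟨s, ⟨hst, -⟩, hus⟩
      exact Submodule.span_mono (Finset.coe_subset.mpr hst) hus
  rw [this]
  exact isClosed_biUnion_finset fun s hs =>
    isClosed_hull_of_linearIndepOn (Finset.mem_filter.mp hs).2

theorem mem_hull_of_forall_dual {s : Set E} (hs : s.Finite) {u : E}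
    (h : ∀ f : StrongDual ℝ E, (∀ x ∈ s, 0 ≤ f x) → 0 ≤ f u) : u ∈ hull ℝ s := by
  lift s to Finset E using hs
  by_contra hu
  obtain ⟨f, hfC, hfu⟩ :=
    ProperCone.hyperplane_separation_point ⟨hull ℝ (s : Set E), isClosed_hull_finset s⟩ hu
  exact hfu.not_ge (h f fun x hx => hfC x (subset_hull hx))

end Topology

end PointedCone

theorem nonneg_of_forall_sub_mul_le {p q c : ℝ} (h : ∀ r, 0 ≤ r → p - r * q ≤ c) : 0 ≤ q := by
  by_contra! hq
  have := h ((|c - p| + 1) / -q) (div_nonneg (by positivity) (neg_nonneg.mpr hq.le))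
  rw [div_mul_eq_mul_div, div_neg, mul_div_cancel_right₀ _ hq.ne, sub_neg_eq_add] at this
  linarith [le_abs_self (c - p)]

theorem LinearMap.exists_apply_prod_eq_dotProduct {ι : Type*} [Fintype ι]
    (f : (ι → ℝ) × ℝ →ₗ[ℝ] ℝ) : ∃ z : ι → ℝ, ∀ a t, f (a, t) = a ⬝ᵥ z + t * f (0, 1) := by
  classical
  refine ⟨fun j => f (fun k => if j = k then 1 else 0, 0), fun a t => ?_⟩
  have : (a, t) = LinearMap.inl ℝ _ ℝ a + t • (0, 1) := by simp
  rw [this, map_add, map_smul, ← LinearMap.comp_apply, LinearMap.pi_apply_eq_sum_univ]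
  simp [dotProduct]

namespace Matrix
variable {ι κ : Type*} [Fintype ι] {D : Matrix κ ι ℝ} {d : κ → ℝ} {x : ι → ℝ} {c : ℝ}

theorem dotProduct_le_of_vecMul_eq [Fintype κ] {y : κ → ℝ} {a : ι → ℝ} (hy : 0 ≤ y)
    (hyx : y ᵥ* D = x) (ha : D *ᵥ a ≤ d) : a ⬝ᵥ x ≤ y ⬝ᵥ d :=
  calc a ⬝ᵥ x = y ⬝ᵥ (D *ᵥ a) := by rw [dotProduct_mulVec, hyx, dotProduct_comm]
    _ ≤ y ⬝ᵥ d := dotProduct_le_dotProduct_of_nonneg_left ha hy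

theorem dotProduct_add_mul_nonneg_of_forall_mulVec_le (hfeas : ∃ a, D *ᵥ a ≤ d)
    (hbound : ∀ a, D *ᵥ a ≤ d → a ⬝ᵥ x ≤ c) {z : ι → ℝ} {s : ℝ} (hs : 0 ≤ s)
    (hz : ∀ k, 0 ≤ (D *ᵥ z) k + d k * s) : 0 ≤ x ⬝ᵥ z + c * s := by
  rcases hs.lt_or_eq with hs | rfl
  · have hfeas : D *ᵥ (-s⁻¹ • z) ≤ d := fun k => by
      have : -s⁻¹ * (D *ᵥ z) k = d k - s⁻¹ * ((D *ᵥ z) k + d k * s) := by field_simp; ring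
      rw [mulVec_smul, Pi.smul_apply, smul_eq_mul, this]
      exact sub_le_self _ (mul_nonneg (inv_nonneg.mpr hs.le) (hz k))
    have h := hbound _ hfeas
    rw [smul_dotProduct, smul_eq_mul, dotProduct_comm] at h
    have : -(x ⬝ᵥ z) ≤ s * c :=
      calc -(x ⬝ᵥ z) = s * (-s⁻¹ * (x ⬝ᵥ z)) := by field_simp
        _ ≤ s * c := mul_le_mul_of_nonneg_left h hs.le
    linarith
  · -- `-z` is a recession direction of the feasible set, along which `· ⬝ᵥ x` stays bounded
    obtain ⟨a, ha⟩ := hfeas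
    simp only [mul_zero, add_zero] at hz ⊢
    refine nonneg_of_forall_sub_mul_le (p := a ⬝ᵥ x) (c := c) fun r hr => ?_
    have hray : D *ᵥ (a - r • z) ≤ d := fun k => by
      simp only [mulVec_sub, mulVec_smul, Pi.sub_apply, Pi.smul_apply, smul_eq_mul]
      nlinarith [ha k, hz k]
    simpa [sub_dotProduct, dotProduct_comm z] using hbound _ hray

theorem exists_nonneg_vecMul_eq_of_forall_mulVec_le [Fintype κ] (hfeas : ∃ a, D *ᵥ a ≤ d)
    (hbound : ∀ a, D *ᵥ a ≤ d → a ⬝ᵥ x ≤ c) : ∃ y, 0 ≤ y ∧ y ᵥ* D = x ∧ y ⬝ᵥ d ≤ c := by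
  let w : Option κ → (ι → ℝ) × ℝ := fun k => k.elim (0, 1) fun k => (D k, d k)
  have hmem : (x, c) ∈ hull ℝ (Set.range w) := by
    refine mem_hull_of_forall_dual (Set.finite_range w) fun f hf => ?_
    obtain ⟨z, hz⟩ := LinearMap.exists_apply_prod_eq_dotProduct (f : (ι → ℝ) × ℝ →ₗ[ℝ] ℝ)
    simp only [Set.forall_mem_range, Option.forall, w, Option.elim] at hf
    simp only [ContinuousLinearMap.coe_coe] at hz
    rw [hz]
    refine dotProduct_add_mul_nonneg_of_forall_mulVec_le hfeas hbound hf.1 fun k => ?_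
    have := hf.2 k
    rwa [hz] at this
  obtain ⟨y, hy, hyx⟩ := mem_hull_range_iff.mp hmem
  simp only [Fintype.sum_option, w, Option.elim, Prod.ext_iff, Prod.fst_add, Prod.snd_add,
    Prod.fst_sum, Prod.snd_sum, Prod.smul_fst, Prod.smul_snd, smul_zero, zero_add, smul_eq_mul,
    mul_one] at hyx
  refine ⟨fun k => y (some k), fun k => hy _, ?_, ?_⟩
  · rw [vecMul_eq_sum]; exact hyx.1
  · have hnone : 0 ≤ y none := hy none
    simp only [dotProduct]
    linarith [hyx.2]

theorem forall_mulVec_le_imp_dotProduct_le_iff [Fintype κ] (hfeas : ∃ a, D *ᵥ a ≤ d) :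
    (∀ a, D *ᵥ a ≤ d → a ⬝ᵥ x ≤ c) ↔ ∃ y, 0 ≤ y ∧ y ᵥ* D = x ∧ y ⬝ᵥ d ≤ c :=
  ⟨exists_nonneg_vecMul_eq_of_forall_mulVec_le hfeas,
    fun ⟨_, hy, hyx, hyd⟩ _ ha => (dotProduct_le_of_vecMul_eq hy hyx ha).trans hyd⟩

section BlockDiagonal
variable {R o : Type*} [NonUnitalNonAssocSemiring R] [Fintype o] {m' n' : o → Type*}

theorem uncurry_dotProduct_uncurry [∀ i, Fintype (n' i)] (v w : ∀ i, n' i → R) :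
    Sigma.uncurry v ⬝ᵥ Sigma.uncurry w = ∑ i, v i ⬝ᵥ w i := by
  simp [dotProduct, Fintype.sum_sigma, Sigma.uncurry]

variable [DecidableEq o]

theorem blockDiagonal'_mulVec_uncurry [∀ i, Fintype (n' i)]
    (M : ∀ i, Matrix (m' i) (n' i) R) (v : ∀ i, n' i → R) (i : o) (k : m' i) :
    (blockDiagonal' M *ᵥ Sigma.uncurry v) ⟨i, k⟩ = (M i *ᵥ v i) k := by
  simp [mulVec, dotProduct, Fintype.sum_sigma, blockDiagonal'_apply']
  rfl

theorem uncurry_vecMul_blockDiagonal' [∀ i, Fintype (m' i)]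
    (M : ∀ i, Matrix (m' i) (n' i) R) (y : ∀ i, m' i → R) (i : o) (j : n' i) :
    (Sigma.uncurry y ᵥ* blockDiagonal' M) ⟨i, j⟩ = (y i ᵥ* M i) j := by
  simp [vecMul, dotProduct, Fintype.sum_sigma, blockDiagonal'_apply']
  rfl

end BlockDiagonal

end Matrix

theorem stmt6_general (N n : ℕ)
    (m : Fin N → ℕ)
    (D : (i : Fin N) → Fin (m i) → Fin n → ℝ)
    (d : (i : Fin N) → Fin (m i) → ℝ)
    (hA : ∀ i, ∃ a : Fin n → ℝ, ∀ k, ∑ j, D i k j * a j ≤ d i k)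
    (x : Fin N → Fin n → ℝ) (b : ℝ) :
    (∀ α : Fin N → Fin n → ℝ,
        (∀ i k, ∑ j, D i k j * α i j ≤ d i k) →
        ∑ i, ∑ j, α i j * x i j ≤ b) ↔
    (∃ y : (i : Fin N) → Fin (m i) → ℝ,
        (∀ i k, 0 ≤ y i k) ∧
        (∀ i j, ∑ k, D i k j * y i k = x i j) ∧
        ∑ i, ∑ k, y i k * d i k ≤ b) := by
  choose a ha using hA
  have hfeas : ∃ a', blockDiagonal' (fun i => of (D i)) *ᵥ a' ≤ Sigma.uncurry d :=
    ⟨Sigma.uncurry a, Sigma.forall.mpr fun i k =>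
      (blockDiagonal'_mulVec_uncurry (fun i => of (D i)) a i k).trans_le (ha i k)⟩
  have duality := forall_mulVec_le_imp_dotProduct_le_iff (x := Sigma.uncurry x) (c := b) hfeas
  rw [← (Equiv.piCurry fun _ (_ : Fin n) => ℝ).symm.forall_congr_right,
    ← (Equiv.piCurry fun i (_ : Fin (m i)) => ℝ).symm.exists_congr_right] at duality
  simp only [Equiv.piCurry_symm_apply, Pi.le_def, funext_iff, Sigma.forall,
    blockDiagonal'_mulVec_uncurry, uncurry_vecMul_blockDiagonal', uncurry_dotProduct_uncurry]
    at duality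
  simpa [Sigma.uncurry, mulVec, vecMul, dotProduct, mul_comm] using duality

/-- Deterministic reformulation (core of Theorem 2): the robust constraint
`Σ_i ⟨α_i, x_i⟩ ≤ b` for all `α_i ∈ A_i = {α : D_i α ≤ d_i}` holds iff there exist
`y_i ≥ 0` with `D_iᵀ y_i = x_i` for all `i` and `Σ_i ⟨y_i, d_i⟩ ≤ b`. -/
theorem stmt6 (N n : ℕ) (hN : 0 < N) (hn : 0 < n)
    (m : Fin N → ℕ) (hm : ∀ i, 0 < m i)
    (D : (i : Fin N) → Fin (m i) → Fin n → ℝ)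
    (d : (i : Fin N) → Fin (m i) → ℝ)
    (hA : ∀ i, ∃ a : Fin n → ℝ, ∀ k, ∑ j, D i k j * a j ≤ d i k)
    (x : Fin N → Fin n → ℝ) (b : ℝ) :
    (∀ α : Fin N → Fin n → ℝ,
        (∀ i k, ∑ j, D i k j * α i j ≤ d i k) →
        ∑ i, ∑ j, α i j * x i j ≤ b) ↔
    (∃ y : (i : Fin N) → Fin (m i) → ℝ,
        (∀ i k, 0 ≤ y i k) ∧
        (∀ i j, ∑ k, D i k j * y i k = x i j) ∧
        ∑ i, ∑ k, y i k * d i k ≤ b) :=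
  stmt6_general N n m D d hA x b
end
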